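/- Let β°_{n,k} satisfy β°_{n,k} = n·β°_{n-1,k} + (2n+k-1)·β°_{n-1,k-1} - (n-k+1)·β°_{n-1,k-2} with β°_{0,0}=1 and β°_{n,k}=0 unless 0 ≤ k ≤ n. Then β°_{n,k} > 0 for all 0 ≤ k ≤ n, and for each n the sequence β°_{n,0}, β°_{n,1}, ..., β°_{n,n} is log-concave: β°_{n,k-1}·β°_{n,k+1} ≤ (β°_{n,k})² for 1 ≤ k ≤ n-1. -/

import Mathlib

/-!
Write `P_n(x) = ∑ₖ β°_{n,k} xᵏ` as `∑ⱼ c_{n,j} x^{n-j} (1 + x)ʲ`. The recurrence for `β°` becomes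
`c_{n+1,j} = (n + 1) c_{n,j-1} + (2n + 1 - j) c_{n,j}`, whose coefficients are nonnegative, so by
induction `c_{n,·}` is positive exactly on `[0, n]` and log-concave. Then
`β°_{n,k} = ∑ⱼ c_{n,j} C(j, n - k)` is, read backwards, the binomial transform of `c_{n,·}`, and
binomial transforms preserve log-concavity of nonnegative sequences without internal zeros: twice
`b_m² - b_{m-1} b_{m+1}` is a double sum which, by Pascal's rule and summation by parts, becomes
`∑_{i,j} (c_i c_j - c_{i-1} c_{j+1}) M(i, j + 1)` with `M` the 2×2 minors of Pascal's matrix, and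
both factors of every term have the same sign.
-/

open Function Set

-- `C(j, m)` for `0 ≤ j`, and `0` for `m < 0`; the value at negative `j` is never used.
noncomputable def intChoose (j m : ℤ) : ℝ :=
  if 0 ≤ m then (j.toNat.choose m.toNat : ℝ) else 0

lemma intChoose_of_neg {j m : ℤ} (hm : m < 0) : intChoose j m = 0 := by
  simp [intChoose, hm.not_ge]

lemma intChoose_natCast (j m : ℕ) : intChoose j m = j.choose m := by
  simp [intChoose]

lemma intChoose_nonneg (j m : ℤ) : 0 ≤ intChoose j m := by
  unfold intChoose; split_ifs <;> positivity

lemma intChoose_of_lt {j m : ℤ} (hj : 0 ≤ j) (hjm : j < m) : intChoose j m = 0 := by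
  lift j to ℕ using hj
  lift m to ℕ using by omega
  rw [intChoose_natCast, Nat.choose_eq_zero_of_lt (by omega), Nat.cast_zero]

lemma intChoose_pos {j m : ℤ} (hm : 0 ≤ m) (hmj : m ≤ j) : 0 < intChoose j m := by
  lift j to ℕ using hm.trans hmj
  lift m to ℕ using hm
  rw [intChoose_natCast]
  exact_mod_cast Nat.choose_pos (by omega)

lemma intChoose_succ_left {j : ℤ} (hj : 0 ≤ j) (m : ℤ) :
    intChoose (j + 1) m = intChoose j (m - 1) + intChoose j m := by
  lift j to ℕ using hj
  obtain hm | rfl | hm := lt_trichotomy m 0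
  · simp [intChoose_of_neg hm, intChoose_of_neg (show m - 1 < 0 by omega)]
  · simp [intChoose]
  · obtain ⟨m, rfl⟩ : ∃ m' : ℕ, m = m' + 1 := ⟨(m - 1).toNat, by omega⟩
    rw [add_sub_cancel_right, show (j : ℤ) + 1 = (j + 1 : ℕ) by push_cast; rfl,
      show (m : ℤ) + 1 = (m + 1 : ℕ) by push_cast; rfl, intChoose_natCast, intChoose_natCast,
      intChoose_natCast, Nat.choose_succ_succ', Nat.cast_add]

lemma succ_mul_intChoose_succ {j : ℤ} (hj : 0 ≤ j) (m : ℤ) :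
    (m + 1) * intChoose j (m + 1) = (j - m) * intChoose j m := by
  lift j to ℕ using hj
  obtain hm | rfl | hm := lt_trichotomy m (-1)
  · simp [intChoose_of_neg (show m < 0 by omega), intChoose_of_neg (show m + 1 < 0 by omega)]
  · simp [intChoose_of_neg (show (-1 : ℤ) < 0 by norm_num)]
  · lift m to ℕ using (show 0 ≤ m by omega)
    rw [show (m : ℤ) + 1 = (m + 1 : ℕ) by push_cast; rfl, intChoose_natCast, intChoose_natCast]
    rcases le_or_gt m j with hmj | hjm
    · have h := congrArg (Nat.cast (R := ℝ)) (Nat.choose_succ_right_eq j m)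
      push_cast [Nat.cast_sub hmj] at h ⊢
      linarith
    · simp [Nat.choose_eq_zero_of_lt hjm, Nat.choose_eq_zero_of_lt (hjm.trans (Nat.lt_succ_self m))]

noncomputable def binomialMinor (m i j : ℤ) : ℝ :=
  intChoose i m * intChoose j (m + 1) - intChoose i (m + 1) * intChoose j m

lemma binomialMinor_nonneg (m : ℤ) {i j : ℤ} (hi : 0 ≤ i) (hij : i ≤ j) :
    0 ≤ binomialMinor m i j := by
  rcases lt_or_ge m 0 with hm | hm
  · simp [binomialMinor, intChoose_of_neg hm]
  have key : (m + 1) * binomialMinor m i j = (j - i) * (intChoose i m * intChoose j m) := by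
    unfold binomialMinor
    linear_combination intChoose i m * succ_mul_intChoose_succ (hi.trans hij) m -
      intChoose j m * succ_mul_intChoose_succ hi m
  refine (mul_nonneg_iff_of_pos_left (by positivity : (0 : ℝ) < m + 1)).mp ?_
  have : (i : ℝ) ≤ j := by exact_mod_cast hij
  rw [key]
  exact mul_nonneg (by linarith) (mul_nonneg (intChoose_nonneg _ _) (intChoose_nonneg _ _))

lemma binomialMinor_sub_binomialMinor_succ {i j : ℤ} (hi : 0 ≤ i) (hj : 0 ≤ j) (m : ℤ) :
    binomialMinor m i (j + 1) - binomialMinor m (i + 1) j =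
      2 * (intChoose i m * intChoose j m) - intChoose i (m - 1) * intChoose j (m + 1) -
        intChoose i (m + 1) * intChoose j (m - 1) := by
  simp only [binomialMinor, intChoose_succ_left hi, intChoose_succ_left hj, add_sub_cancel_right]
  ring

def IsLogConcave (a : ℤ → ℝ) : Prop :=
  ∀ j, a (j - 1) * a (j + 1) ≤ a j ^ 2

namespace IsLogConcave

variable {a : ℤ → ℝ}

theorem comp_sub (hlc : IsLogConcave a) (n : ℤ) : IsLogConcave (fun k => a (n - k)) := by
  intro k
  have h := hlc (n - k)
  rw [show n - k - 1 = n - (k + 1) by ring, show n - k + 1 = n - (k - 1) by ring] at h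
  linarith [mul_comm (a (n - (k + 1))) (a (n - (k - 1)))]

theorem mul_le_mul_of_le (hlc : IsLogConcave a) (ha : 0 ≤ a) (hconn : (support a).OrdConnected)
    {i j : ℤ} (hij : i ≤ j) : a (i - 1) * a (j + 1) ≤ a i * a j := by
  induction j, hij using Int.leInduction with
  | base => simpa [sq] using hlc i
  | succ j hij ih =>
    obtain h | hlo := eq_or_ne (a (i - 1)) 0
    · simp [h, mul_nonneg (ha i) (ha (j + 1))]
    obtain h | hhi := eq_or_ne (a (j + 1 + 1)) 0
    · simp [h, mul_nonneg (ha i) (ha (j + 1))]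
    have hpos : ∀ t ∈ Icc (i - 1) (j + 1 + 1), 0 < a t := fun t ht =>
      (ha t).lt_of_ne' (hconn.out hlo hhi ht)
    have hj : 0 < a j := hpos j ⟨by omega, by omega⟩
    have hj1 : 0 < a (j + 1) := hpos (j + 1) ⟨by omega, by omega⟩
    have hstep := hlc (j + 1)
    rw [add_sub_cancel_right] at hstep
    refine le_of_mul_le_mul_right ?_ (mul_pos hj hj1)
    nlinarith [mul_le_mul ih hstep (mul_nonneg (ha _) (ha _)) (mul_nonneg (ha _) (ha _))]

theorem linear_recurrence (hlc : IsLogConcave a) (ha : 0 ≤ a) (hconn : (support a).OrdConnected)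
    {u v : ℝ} (hu : 0 ≤ u) (hv : ∀ j, a j ≠ 0 → (j : ℝ) + 1 ≤ v) :
    IsLogConcave (fun j => u * a (j - 1) + (v - j) * a j) := by
  intro j
  have h1 := hlc (j - 1)
  have h2 := hlc j
  have h3 : 0 ≤ (v - j - 1) * (a (j - 1) * a j - a (j - 1 - 1) * a (j + 1)) := by
    by_cases hj : (j : ℝ) + 1 ≤ v
    · refine mul_nonneg (by linarith) (sub_nonneg.mpr ?_)
      simpa using hlc.mul_le_mul_of_le ha hconn (show j - 1 ≤ j by omega)
    · have hj0 : a j = 0 := by_contra fun h => hj (hv j h)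
      have hj1 : a (j + 1) = 0 := by_contra fun h => hj <| by
        have := hv _ h
        push_cast at this
        linarith
      simp [hj0, hj1]
  simp only [sub_add_cancel, add_sub_cancel_right] at h1 ⊢
  push_cast
  linear_combination u ^ 2 * h1 + u * h3 + (v - j) ^ 2 * h2 + mul_nonneg (ha (j - 1)) (ha (j + 1))

end IsLogConcave

theorem Function.HasFiniteSupport.mul_prod {α β R : Type*} [MulZeroClass R] {f : α → R}
    {g : β → R} (hf : f.HasFiniteSupport) (hg : g.HasFiniteSupport) :
    HasFiniteSupport (fun p : α × β => f p.1 * g p.2) :=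
  (hf.prod hg).subset fun _ hp => ⟨left_ne_zero_of_mul hp, right_ne_zero_of_mul hp⟩

theorem finsum_mul_finsum {α β R : Type*} [NonUnitalNonAssocSemiring R] {f : α → R} {g : β → R}
    (hf : f.HasFiniteSupport) (hg : g.HasFiniteSupport) :
    (∑ᶠ i, f i) * (∑ᶠ j, g j) = ∑ᶠ p : α × β, f p.1 * g p.2 := by
  classical
  rw [finsum_eq_sum f hf, finsum_eq_sum g hg, Finset.sum_mul_sum, ← Finset.sum_product',
    finsum_eq_sum_of_support_subset]
  intro p hp
  exact Finset.mem_product.2 ⟨hf.mem_toFinset.2 (left_ne_zero_of_mul hp),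
    hg.mem_toFinset.2 (right_ne_zero_of_mul hp)⟩

noncomputable def binomialTransform (c : ℤ → ℝ) (m : ℤ) : ℝ :=
  ∑ᶠ j, c j * intChoose j m

section binomialTransform

variable {c d : ℤ → ℝ}

theorem binomialTransform_add (hc : c.HasFiniteSupport) (hd : d.HasFiniteSupport) (m : ℤ) :
    binomialTransform (fun j => c j + d j) m = binomialTransform c m + binomialTransform d m := by
  simp only [binomialTransform, add_mul]
  exact finsum_add_distrib (by fun_prop) (by fun_prop)

theorem binomialTransform_const_mul (u : ℝ) (m : ℤ) :
    binomialTransform (fun j => u * c j) m = u * binomialTransform c m := by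
  simp only [binomialTransform, mul_finsum, mul_assoc]

theorem binomialTransform_comp_sub_one (hc : c.HasFiniteSupport) (hneg : ∀ j < 0, c j = 0)
    (m : ℤ) :
    binomialTransform (fun j => c (j - 1)) m =
      binomialTransform c (m - 1) + binomialTransform c m := by
  unfold binomialTransform
  rw [← finsum_add_distrib (by fun_prop) (by fun_prop), ← finsum_comp_equiv (Equiv.addRight 1)]
  refine finsum_congr fun j => ?_
  simp only [Equiv.coe_addRight, add_sub_cancel_right]
  rcases lt_or_ge j 0 with hj | hj
  · simp [hneg j hj]
  · rw [intChoose_succ_left hj]; ring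

theorem binomialTransform_sub_mul (hc : c.HasFiniteSupport) (hneg : ∀ j < 0, c j = 0)
    (v : ℝ) (m : ℤ) :
    binomialTransform (fun j => (v - j) * c j) m =
      (v - m) * binomialTransform c m - (m + 1) * binomialTransform c (m + 1) := by
  unfold binomialTransform
  rw [mul_finsum, mul_finsum, ← finsum_sub_distrib (by fun_prop) (by fun_prop)]
  refine finsum_congr fun j => ?_
  rcases lt_or_ge j 0 with hj | hj
  · simp [hneg j hj]
  · linear_combination c j * succ_mul_intChoose_succ hj m

theorem IsLogConcave.mul_binomialMinor_nonneg (hlc : IsLogConcave c) (hc0 : 0 ≤ c)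
    (hconn : (support c).OrdConnected) (hneg : ∀ j < 0, c j = 0) (m i j : ℤ) :
    0 ≤ (c i * c j - c (i - 1) * c (j + 1)) * binomialMinor m i (j + 1) := by
  rcases le_or_gt i j with hij | hji
  · rcases lt_or_ge i 0 with hi | hi
    · simp [hneg i hi, hneg (i - 1) (by omega)]
    exact mul_nonneg (sub_nonneg.2 (hlc.mul_le_mul_of_le hc0 hconn hij))
      (binomialMinor_nonneg m hi (by omega))
  rcases eq_or_lt_of_le (show j + 1 ≤ i by omega) with rfl | hji
  · simp [binomialMinor, mul_comm]
  rcases lt_or_ge (j + 1) 0 with hj | hj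
  · simp [hneg j (by omega), hneg (j + 1) hj]
  have htoep := hlc.mul_le_mul_of_le hc0 hconn (show j + 1 ≤ i - 1 by omega)
  simp only [add_sub_cancel_right, sub_add_cancel] at htoep
  have hminor : binomialMinor m i (j + 1) = -binomialMinor m (j + 1) i := by
    unfold binomialMinor; ring
  rw [hminor]
  exact mul_nonneg_of_nonpos_of_nonpos (by linarith [mul_comm (c i) (c j)])
    (neg_nonpos.2 (binomialMinor_nonneg m hj hji.le))

theorem two_mul_binomialTransform_sq_sub (hc : c.HasFiniteSupport) (hneg : ∀ j < 0, c j = 0)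
    (m : ℤ) :
    2 * (binomialTransform c m ^ 2 - binomialTransform c (m - 1) * binomialTransform c (m + 1)) =
      ∑ᶠ p : ℤ × ℤ,
        (c p.1 * c p.2 - c (p.1 - 1) * c (p.2 + 1)) * binomialMinor m p.1 (p.2 + 1) := by
  set w : ℤ × ℤ → ℝ := fun p => c p.1 * c p.2
  have hw : w.HasFiniteSupport := hc.mul_prod hc
  let e : ℤ × ℤ ≃ ℤ × ℤ := (Equiv.addRight 1).prodCongr (Equiv.subRight 1)
  have he (p : ℤ × ℤ) : e.symm p = (p.1 - 1, p.2 + 1) := by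
    ext <;> simp [e, sub_eq_add_neg]
  let K : ℤ × ℤ → ℝ := fun p => binomialMinor m p.1 (p.2 + 1)
  have hprod (r s : ℤ) : binomialTransform c r * binomialTransform c s =
      ∑ᶠ p, w p * (intChoose p.1 r * intChoose p.2 s) := by
    rw [binomialTransform, binomialTransform, finsum_mul_finsum (by fun_prop) (by fun_prop)]
    exact finsum_congr fun p => by ring
  have hsym (p : ℤ × ℤ) : w p * (2 * (intChoose p.1 m * intChoose p.2 m) -
      intChoose p.1 (m - 1) * intChoose p.2 (m + 1) -
      intChoose p.1 (m + 1) * intChoose p.2 (m - 1)) = w p * (K p - K (e p)) := by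
    obtain ⟨i, j⟩ := p
    rcases lt_or_ge i 0 with hi | hi
    · simp [w, hneg i hi]
    rcases lt_or_ge j 0 with hj | hj
    · simp [w, hneg j hj]
    simp [K, e, binomialMinor_sub_binomialMinor_succ hi hj]
  have hshift : ∑ᶠ p, w p * K (e p) = ∑ᶠ p, w (e.symm p) * K p := by
    simpa using finsum_comp_equiv e (f := fun p => w (e.symm p) * K p)
  set b := binomialTransform c
  calc 2 * (b m ^ 2 - b (m - 1) * b (m + 1))
      = b m * b m + b m * b m - b (m - 1) * b (m + 1) - b (m + 1) * b (m - 1) := by ring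
    _ = ∑ᶠ p, w p * (K p - K (e p)) := by
      simp only [hprod, ← hsym]
      rw [← finsum_add_distrib (by fun_prop) (by fun_prop),
        ← finsum_sub_distrib (by fun_prop) (by fun_prop),
        ← finsum_sub_distrib (by fun_prop) (by fun_prop)]
      exact finsum_congr fun p => by ring
    _ = ∑ᶠ p, (w p - w (e.symm p)) * K p := by
      simp only [mul_sub, sub_mul]
      rw [finsum_sub_distrib (by fun_prop) (by fun_prop), hshift,
        finsum_sub_distrib (by fun_prop) (by fun_prop (disch := exact e.symm.injective))]
    _ = _ := finsum_congr fun p => by rw [he]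

theorem isLogConcave_binomialTransform (hlc : IsLogConcave c) (hc0 : 0 ≤ c)
    (hconn : (support c).OrdConnected) (hc : c.HasFiniteSupport) (hneg : ∀ j < 0, c j = 0) :
    IsLogConcave (binomialTransform c) := by
  intro m
  have hsum := finsum_nonneg fun p : ℤ × ℤ =>
    hlc.mul_binomialMinor_nonneg hc0 hconn hneg m p.1 p.2
  linarith [two_mul_binomialTransform_sq_sub hc hneg m]

end binomialTransform

noncomputable def lambertCoeff : ℕ → ℤ → ℝ
  | 0, j => if j = 0 then 1 else 0
  | n + 1, j => (n + 1) * lambertCoeff n (j - 1) + (2 * n + 1 - j) * lambertCoeff n j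

lemma lambertCoeff_succ (n : ℕ) :
    lambertCoeff (n + 1) =
      fun j => (n + 1) * lambertCoeff n (j - 1) + (2 * n + 1 - j) * lambertCoeff n j :=
  rfl

lemma lambertCoeff_eq_zero {n : ℕ} {j : ℤ} (hj : j ∉ Icc 0 (n : ℤ)) : lambertCoeff n j = 0 := by
  induction n generalizing j with
  | zero => simp_all [lambertCoeff]
  | succ n ih =>
    simp only [mem_Icc, not_and_or, not_le] at hj
    rw [lambertCoeff, ih (by simp; omega), ih (by simp; omega)]
    ring

lemma lambertCoeff_of_neg (n : ℕ) {j : ℤ} (hj : j < 0) : lambertCoeff n j = 0 :=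
  lambertCoeff_eq_zero fun h => hj.not_ge h.1

lemma lambertCoeff_pos {n : ℕ} {j : ℤ} (hj : j ∈ Icc 0 (n : ℤ)) : 0 < lambertCoeff n j := by
  induction n generalizing j with
  | zero => simp_all [lambertCoeff]
  | succ n ih =>
    obtain ⟨hj0, hjn⟩ := hj
    rw [lambertCoeff]
    rcases eq_or_lt_of_le hj0 with rfl | hj0
    · rw [lambertCoeff_of_neg n (by norm_num)]
      simpa using mul_pos (by positivity : (0 : ℝ) < 2 * n + 1) (ih ⟨le_rfl, by omega⟩)
    have hnonneg : 0 ≤ lambertCoeff n j := by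
      by_cases h : j ≤ n
      · exact (ih ⟨hj0.le, h⟩).le
      · exact (lambertCoeff_eq_zero (by simp; omega)).ge
    have hcoeff : (0 : ℝ) ≤ 2 * n + 1 - j := by
      have : (j : ℝ) ≤ n + 1 := by exact_mod_cast hjn
      linarith [(n.cast_nonneg : (0 : ℝ) ≤ n)]
    exact add_pos_of_pos_of_nonneg (mul_pos (by positivity) (ih ⟨by omega, by omega⟩))
      (mul_nonneg hcoeff hnonneg)

lemma support_lambertCoeff (n : ℕ) : support (lambertCoeff n) = Icc 0 (n : ℤ) := by
  ext j
  exact ⟨fun h => by_contra fun hj => h (lambertCoeff_eq_zero hj),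
    fun hj => (lambertCoeff_pos hj).ne'⟩

lemma lambertCoeff_nonneg (n : ℕ) : 0 ≤ lambertCoeff n := fun j => by
  by_cases hj : j ∈ Icc 0 (n : ℤ)
  · exact (lambertCoeff_pos hj).le
  · exact (lambertCoeff_eq_zero hj).ge

lemma lambertCoeff_hasFiniteSupport (n : ℕ) : (lambertCoeff n).HasFiniteSupport := by
  rw [HasFiniteSupport, support_lambertCoeff]
  exact finite_Icc _ _

lemma isLogConcave_lambertCoeff (n : ℕ) : IsLogConcave (lambertCoeff n) := by
  induction n with
  | zero =>
    intro j
    have : lambertCoeff 0 (j - 1) * lambertCoeff 0 (j + 1) = 0 := by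
      rcases eq_or_ne j 1 with rfl | hj
      · simp [lambertCoeff]
      · simp [lambertCoeff, show j - 1 ≠ 0 by omega]
    rw [this]
    positivity
  | succ n ih =>
    rw [lambertCoeff_succ]
    refine ih.linear_recurrence (lambertCoeff_nonneg n) ?_ (by positivity) fun j hj => ?_
    · rw [support_lambertCoeff]; exact ordConnected_Icc
    · have : j ≤ n := by_contra fun h => hj (lambertCoeff_eq_zero (by simp; omega))
      have : (j : ℝ) ≤ n := by exact_mod_cast this
      linarith [(n.cast_nonneg : (0 : ℝ) ≤ n)]

noncomputable def lambertTriangle (n : ℕ) (k : ℤ) : ℝ :=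
  binomialTransform (lambertCoeff n) (n - k)

lemma lambertTriangle_zero (k : ℤ) : lambertTriangle 0 k = if k = 0 then 1 else 0 := by
  rw [lambertTriangle, binomialTransform,
    finsum_eq_single _ 0 fun j hj => by simp [lambertCoeff, hj]]
  rcases lt_trichotomy k 0 with hk | rfl | hk
  · simp [hk.ne, intChoose_of_lt le_rfl (show (0 : ℤ) < -k by omega)]
  · simp [lambertCoeff, intChoose]
  · simp [hk.ne', intChoose_of_neg (show -k < 0 by omega)]

lemma lambertTriangle_succ (n : ℕ) (k : ℤ) :
    lambertTriangle (n + 1) k =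
      ((n : ℝ) + 1) * lambertTriangle n k +
        (2 * ((n : ℝ) + 1) + (k : ℝ) - 1) * lambertTriangle n (k - 1) -
        ((n : ℝ) + 1 - (k : ℝ) + 1) * lambertTriangle n (k - 2) := by
  have hfin := lambertCoeff_hasFiniteSupport n
  have hneg : ∀ j < 0, lambertCoeff n j = 0 := fun j => lambertCoeff_of_neg n
  rw [lambertTriangle, lambertCoeff_succ,
    binomialTransform_add (by fun_prop (disch := exact sub_left_injective)) (by fun_prop),
    binomialTransform_const_mul, binomialTransform_comp_sub_one hfin hneg,
    binomialTransform_sub_mul hfin hneg]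
  simp only [lambertTriangle]
  rw [show ((n + 1 : ℕ) : ℤ) - k - 1 = n - k by push_cast; ring,
    show ((n + 1 : ℕ) : ℤ) - k = n - (k - 1) by push_cast; ring,
    show (n : ℤ) - (k - 1) + 1 = n - (k - 2) by ring]
  push_cast
  ring

lemma lambertTriangle_pos {n : ℕ} {k : ℤ} (hk0 : 0 ≤ k) (hkn : k ≤ n) : 0 < lambertTriangle n k :=
  calc 0 < lambertCoeff n n * intChoose n (n - k) :=
        mul_pos (lambertCoeff_pos ⟨n.cast_nonneg, le_rfl⟩) (intChoose_pos (by omega) (by omega))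
    _ ≤ lambertTriangle n k :=
        single_le_finsum (n : ℤ)
          ((lambertCoeff_hasFiniteSupport n).fun_mul_left fun j => intChoose j (n - k))
          fun j => mul_nonneg (lambertCoeff_nonneg n j) (intChoose_nonneg _ _)

lemma isLogConcave_lambertTriangle (n : ℕ) : IsLogConcave (lambertTriangle n) := by
  have hconn : (support (lambertCoeff n)).OrdConnected := by
    rw [support_lambertCoeff]; exact ordConnected_Icc
  exact (isLogConcave_binomialTransform (isLogConcave_lambertCoeff n) (lambertCoeff_nonneg n)
    hconn (lambertCoeff_hasFiniteSupport n) fun j => lambertCoeff_of_neg n).comp_sub n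

lemma eq_lambertTriangle_of_recurrence {B : ℕ → ℤ → ℝ} (hB0 : B 0 0 = 1)
    (hBb : ∀ k ≠ 0, B 0 k = 0)
    (hBrec : ∀ (n : ℕ) (k : ℤ), B (n + 1) k =
      ((n : ℝ) + 1) * B n k + (2 * ((n : ℝ) + 1) + (k : ℝ) - 1) * B n (k - 1) -
        ((n : ℝ) + 1 - (k : ℝ) + 1) * B n (k - 2)) :
    B = lambertTriangle := by
  funext n k
  induction n generalizing k with
  | zero =>
    rw [lambertTriangle_zero]
    split_ifs with hk
    · rw [hk, hB0]
    · exact hBb k hk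
  | succ n ih => rw [hBrec, lambertTriangle_succ, ih, ih, ih]

theorem lambert_triangle_positive_and_log_concave
    (B : ℕ → ℤ → ℝ)
    (hB0 : B 0 0 = 1)
    (hBb : ∀ (n : ℕ) (k : ℤ), (k < 0 ∨ (n : ℤ) < k) → B n k = 0)
    (hBrec : ∀ (n : ℕ) (k : ℤ),
      B (n + 1) k =
        ((n : ℝ) + 1) * B n k + (2 * ((n : ℝ) + 1) + (k : ℝ) - 1) * B n (k - 1) -
          ((n : ℝ) + 1 - (k : ℝ) + 1) * B n (k - 2)) :
    (∀ n k : ℕ, k ≤ n → 0 < B n (k : ℤ)) ∧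
    (∀ n k : ℕ, 1 ≤ k → k + 1 ≤ n →
      B n ((k : ℤ) - 1) * B n ((k : ℤ) + 1) ≤ (B n (k : ℤ)) ^ 2) := by
  obtain rfl := eq_lambertTriangle_of_recurrence hB0 (fun k hk => hBb 0 k (by omega)) hBrec
  exact ⟨fun n k hk => lambertTriangle_pos (by omega) (by omega),
    fun n k _ _ => isLogConcave_lambertTriangle n k⟩
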